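/- The number of vectors a ∈ [k]^n with Δ(a) lying in the refinement interval [Φ_c, Φ_f], where Φ_c has j blocks and Φ_f is a length-n refinement of Φ_c, equals C(k+n−j, n). -/

import Mathlib

/-- A scheduling problem on `n` items: a boolean formula over atoms `x i ≤ x j`. -/
inductive SForm (n : ℕ) : Type
  | atom (i j : Fin n) : SForm n
  | not (φ : SForm n) : SForm n
  | and (φ ψ : SForm n) : SForm n
  | or (φ ψ : SForm n) : SForm n

/-- Evaluation of a scheduling formula at an assignment `a : Fin n → ℕ`. -/
def SForm.eval {n : ℕ} : SForm n → (Fin n → ℕ) → Bool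
  | .atom i j, a => decide (a i ≤ a j)
  | .not φ, a => !(φ.eval a)
  | .and φ ψ, a => φ.eval a && ψ.eval a
  | .or φ ψ, a => φ.eval a || ψ.eval a

/-- `schedCount S k` = number of vectors `a ∈ [k]^n` (entries in `{1,…,k}`) solving `S`. -/
def schedCount {n : ℕ} (S : SForm n) (k : ℕ) : ℕ :=
  ((Fintype.piFinset fun _ : Fin n => Finset.Icc 1 k).filter
    fun a => S.eval a = true).card

/-- An ordered set partition of `[n]`. -/
structure OSP (n : ℕ) where
  blocks : List (Finset (Fin n))
  nonempty : ∀ B ∈ blocks, B.Nonempty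
  pairwiseDisjoint : blocks.Pairwise Disjoint
  cover : ∀ i : Fin n, ∃ B ∈ blocks, i ∈ B

/-- Number of blocks of an ordered set partition. -/
def OSP.length {n : ℕ} (Φ : OSP n) : ℕ := Φ.blocks.length

/-- `Φ.delta a` : the order class of `a` is `Φ`, i.e. coordinates of `a` are constant on each
block and ordered according to the block order. -/
def OSP.delta {n : ℕ} (Φ : OSP n) (a : Fin n → ℕ) : Prop :=
  ∃ idx : Fin n → Fin Φ.blocks.length,
    (∀ i, i ∈ Φ.blocks.get (idx i)) ∧
    (∀ i j, a i ≤ a j ↔ (idx i : ℕ) ≤ (idx j : ℕ))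

/-- An ordered set partition `Φ` solves `S` if every vector with order class `Φ` satisfies `S`. -/
def OSP.solves {n : ℕ} (Φ : OSP n) (S : SForm n) : Prop :=
  ∀ a : Fin n → ℕ, Φ.delta a → S.eval a = true

/-- `Ψ.refines Φ` : `Φ` is obtained from `Ψ` by merging consecutive blocks. -/
def OSP.refines {n : ℕ} (Ψ Φ : OSP n) : Prop :=
  ∃ g : Fin Ψ.blocks.length → Fin Φ.blocks.length,
    Monotone g ∧
    ∀ l : Fin Φ.blocks.length,
      Φ.blocks.get l =
        (Finset.univ.filter fun m => g m = l).biUnion fun m => Ψ.blocks.get m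

/-- One step of directed refinement: `F` is obtained from `C` by splitting one block into two
adjacent blocks, every element of the first being less than every element of the second. -/
def dirCov {n : ℕ} (C F : OSP n) : Prop :=
  ∃ (L R : List (Finset (Fin n))) (B₁ B₂ : Finset (Fin n)),
    F.blocks = L ++ B₁ :: B₂ :: R ∧
    C.blocks = L ++ (B₁ ∪ B₂) :: R ∧
    ∀ x ∈ B₁, ∀ y ∈ B₂, x < y

/-- `dirRef C F` : `F` is a directed refinement of `C` (`C ⪯ F`). -/
def dirRef {n : ℕ} : OSP n → OSP n → Prop := Relation.ReflTransGen dirCov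

/-!
An ordered set partition `Φ` only matters through its block-index map `Φ.index`: `Φ.delta a`
says that `a` induces the total preorder `Φ.index x ≤ Φ.index y`, and refinement is inclusion of
these preorders. Hence the order class of `a` lies in `[Φc, Φf]` iff `a` increases weakly along
the total order `Φf` and `a x ≤ a y` forces `Φc.index x ≤ Φc.index y`. Reading `a` along `Φf`
as `b : Fin n → ℕ` and writing `g` for the monotone surjection `Fin n → Fin j` of blocks, this
says that `b - g` is monotone. Then `d p = b p + p - g p - 1` is strictly increasing with values
in `[0, k + n - j)`, and `b ↦ d` is a bijection onto the `n`-subsets of that range.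
-/

open Function

lemma Fin.monotone_of_le_succ {N : ℕ} {α : Type*} [Preorder α] {f : Fin N → α}
    (h : ∀ p q : Fin N, (q : ℕ) = p + 1 → f p ≤ f q) : Monotone f := by
  cases N with
  | zero => exact fun p => p.elim0
  | succ N => exact Fin.monotone_iff_le_succ.mpr fun i => h _ _ (by simp)

lemma Fin.monotone_val_sub_of_strictMono {N : ℕ} {f : Fin N → ℕ} (hf : StrictMono f) :
    Monotone fun p => (f p : ℤ) - (p : ℕ) :=
  Fin.monotone_of_le_succ fun p q hpq => by
    have : f p < f q := hf (Fin.lt_def.mpr (by omega))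
    omega

lemma Nat.card_fin_orderEmbedding {N : ℕ} {I : Type*} [LinearOrder I] :
    Nat.card (Fin N ↪o I) = (Nat.card I).choose N := by
  rw [Nat.card_congr Set.powersetCard.ofFinEmbEquiv, Set.powersetCard.card]

lemma Fin.val_le_orderEmbedding_apply {N M : ℕ} (d : Fin N ↪o Fin M) (p : Fin N) :
    (p : ℕ) ≤ d p := by
  have := Fin.monotone_val_sub_of_strictMono (Fin.val_strictMono.comp d.strictMono)
    (show (⟨0, p.pos⟩ : Fin N) ≤ p from Fin.le_def.mpr (Nat.zero_le _))
  simp only [Function.comp_apply] at this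
  omega

lemma Fin.orderEmbedding_apply_add_le {N M : ℕ} (d : Fin N ↪o Fin M) (p : Fin N) :
    (d p : ℕ) + N ≤ M + p := by
  have hN : N - 1 < N := Nat.sub_lt p.pos Nat.one_pos
  have := Fin.monotone_val_sub_of_strictMono (Fin.val_strictMono.comp d.strictMono)
    (show p ≤ ⟨N - 1, hN⟩ from Fin.le_def.mpr (Nat.le_sub_one_of_lt p.isLt))
  have := (d ⟨N - 1, hN⟩).isLt
  simp only [Function.comp_apply] at *
  omega

namespace Monotone

variable {N J : ℕ} {g : Fin N → Fin J}

/-- That is, `g` never skips a value. -/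
lemma monotone_val_sub_of_surjective (hg : Monotone g) (hs : Surjective g) :
    Monotone fun p : Fin N => ((p : ℕ) : ℤ) - (g p : ℕ) := by
  refine Fin.monotone_of_le_succ fun p q hpq => ?_
  suffices (g q : ℕ) ≤ g p + 1 by omega
  by_contra! hgap
  obtain ⟨m, hm⟩ := hs ⟨g p + 1, by omega⟩
  rcases le_or_gt m p with hmp | hpm
  · have := Fin.le_def.mp (hg hmp)
    simp only [hm] at this
    omega
  · have := Fin.le_def.mp (hg (Fin.le_def.mpr (show (q : ℕ) ≤ m by omega)))
    simp only [hm] at this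
    omega

lemma val_le_of_surjective (hg : Monotone g) (hs : Surjective g) (p : Fin N) :
    (g p : ℕ) ≤ p := by
  obtain ⟨m, hm⟩ := hs ⟨0, by have := (g p).isLt; omega⟩
  rcases le_total m p with hmp | hpm
  · have := hg.monotone_val_sub_of_surjective hs hmp
    simp only [hm] at this
    omega
  · have := Fin.le_def.mp (hg hpm)
    simp only [hm] at this
    omega

lemma add_le_add_val_of_surjective (hg : Monotone g) (hs : Surjective g) (p : Fin N) :
    J + p ≤ N + g p := by
  obtain ⟨m, hm⟩ := hs ⟨J - 1, by have := (g p).isLt; omega⟩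
  have := m.isLt
  rcases le_total p m with hpm | hmp
  · have := hg.monotone_val_sub_of_surjective hs hpm
    simp only [hm] at this
    omega
  · have := Fin.le_def.mp (hg hmp)
    simp only [hm] at this
    omega

lemma monotone_and_le_imp_le_iff (hg : Monotone g) (hs : Surjective g) {b : Fin N → ℕ} :
    (Monotone b ∧ ∀ p q, b p ≤ b q → g p ≤ g q) ↔ Monotone fun p => (b p : ℤ) - (g p : ℕ) := by
  constructor
  · rintro ⟨hb, hbg⟩
    refine Fin.monotone_of_le_succ fun p q hpq => ?_
    have hpq' : p ≤ q := Fin.le_def.mpr (by omega)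
    have hstep := hg.monotone_val_sub_of_surjective hs hpq'
    have := hb hpq'
    have := Fin.le_def.mp (hg hpq')
    have := fun h => Fin.le_def.mp (hbg q p h)
    simp only at hstep ⊢
    omega
  · intro hc
    refine ⟨fun p q hpq => ?_, fun p q hbpq => ?_⟩
    · have hcpq := hc hpq
      have := Fin.le_def.mp (hg hpq)
      simp only at hcpq
      omega
    · rcases le_total p q with hpq | hqp
      · exact hg hpq
      · have := hc hqp
        simp only at this
        exact Fin.le_def.mpr (by omega)

end Monotone

section HalfOpenSimplex

variable {N J : ℕ} {g : Fin N → Fin J}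

/-- For monotone surjective `g` these are the `b ∈ [k]^N` that increase weakly, and strictly
wherever `g` jumps (`Monotone.monotone_and_le_imp_le_iff`). -/
def intervalPoints (g : Fin N → Fin J) (k : ℕ) : Set (Fin N → ℕ) :=
  {b | (∀ p, b p ∈ Finset.Icc 1 k) ∧ Monotone fun p => (b p : ℤ) - (g p : ℕ)}

/-- Inverse to `b ↦ (p ↦ b p + p - g p - 1)`, which turns `b - g` monotone into `d` strictly
monotone. -/
def shiftAlong (g : Fin N → Fin J) {M : ℕ} (d : Fin N ↪o Fin M) (p : Fin N) : ℕ :=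
  d p + g p + 1 - p

lemma shiftAlong_injective {M : ℕ} : Injective (shiftAlong g (M := M)) := by
  intro d d' h
  ext p
  have := congrFun h p
  have := Fin.val_le_orderEmbedding_apply d p
  have := Fin.val_le_orderEmbedding_apply d' p
  simp only [shiftAlong] at *
  omega

lemma shiftAlong_mem_intervalPoints {k : ℕ} (d : Fin N ↪o Fin (k + N - J)) :
    shiftAlong g d ∈ intervalPoints g k := by
  refine ⟨fun p => ?_, fun p q hpq => ?_⟩
  · have := Fin.val_le_orderEmbedding_apply d p
    have := Fin.orderEmbedding_apply_add_le d p
    have := (g p).isLt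
    simp only [shiftAlong, Finset.mem_Icc]
    omega
  · have := Fin.monotone_val_sub_of_strictMono (Fin.val_strictMono.comp d.strictMono) hpq
    have := Fin.val_le_orderEmbedding_apply d p
    have := Fin.val_le_orderEmbedding_apply d q
    simp only [shiftAlong, Function.comp_apply] at *
    omega

lemma mem_range_shiftAlong (hg : Monotone g) (hs : Surjective g) {k : ℕ} {b : Fin N → ℕ}
    (hb : b ∈ intervalPoints g k) : b ∈ Set.range (shiftAlong g (M := k + N - J)) := by
  obtain ⟨hbk, hbg⟩ := hb
  have hlow : ∀ p, (g p : ℕ) + 1 ≤ b p := fun p => by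
    have := hbg (show (⟨0, p.pos⟩ : Fin N) ≤ p from Fin.le_def.mpr (Nat.zero_le _))
    have := hg.val_le_of_surjective hs ⟨0, p.pos⟩
    have := Finset.mem_Icc.mp (hbk ⟨0, p.pos⟩)
    simp only at *
    omega
  have hup : ∀ p, b p + p - g p - 1 < k + N - J := fun p => by
    have := hlow p
    have := hg.add_le_add_val_of_surjective hs p
    have := Finset.mem_Icc.mp (hbk p)
    omega
  refine ⟨OrderEmbedding.ofStrictMono (fun p => ⟨b p + p - g p - 1, hup p⟩) fun p q hpq => ?_,
    funext fun p => ?_⟩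
  · have := hbg hpq.le
    have := hlow p
    have := hlow q
    rw [Fin.lt_def] at hpq ⊢
    simp only at *
    omega
  · change b p + p - g p - 1 + g p + 1 - p = b p
    have := hlow p
    omega

lemma range_shiftAlong (hg : Monotone g) (hs : Surjective g) (k : ℕ) :
    Set.range (shiftAlong g (M := k + N - J)) = intervalPoints g k :=
  (Set.range_subset_iff.mpr shiftAlong_mem_intervalPoints).antisymm
    fun _ => mem_range_shiftAlong hg hs

theorem ncard_intervalPoints (hg : Monotone g) (hs : Surjective g) (k : ℕ) :
    (intervalPoints g k).ncard = (k + N - J).choose N := by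
  rw [← range_shiftAlong hg hs, Set.ncard_range_of_injective shiftAlong_injective,
    Nat.card_fin_orderEmbedding, Nat.card_eq_fintype_card, Fintype.card_fin]

end HalfOpenSimplex

lemma List.eq_of_mem_get_of_pairwise_disjoint {α : Type*} {L : List (Finset α)}
    (h : L.Pairwise _root_.Disjoint) {l l' : Fin L.length} {x : α} (hx : x ∈ L.get l)
    (hx' : x ∈ L.get l') : l = l' := by
  rcases lt_trichotomy l l' with hlt | he | hlt
  · exact absurd hx' (Finset.disjoint_left.mp (List.pairwise_iff_get.mp h l l' hlt) hx)
  · exact he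
  · exact absurd hx (Finset.disjoint_left.mp (List.pairwise_iff_get.mp h l' l hlt) hx')

namespace OSP

variable {n : ℕ}

noncomputable def index (Φ : OSP n) (x : Fin n) : Fin Φ.blocks.length :=
  (List.mem_iff_get.mp (Φ.cover x).choose_spec.1).choose

lemma mem_get_index (Φ : OSP n) (x : Fin n) : x ∈ Φ.blocks.get (Φ.index x) := by
  rw [index, (List.mem_iff_get.mp (Φ.cover x).choose_spec.1).choose_spec]
  exact (Φ.cover x).choose_spec.2

lemma mem_get_iff {Φ : OSP n} {x : Fin n} {l : Fin Φ.blocks.length} :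
    x ∈ Φ.blocks.get l ↔ Φ.index x = l :=
  ⟨fun hx => List.eq_of_mem_get_of_pairwise_disjoint Φ.pairwiseDisjoint (Φ.mem_get_index x) hx,
    fun hl => hl ▸ Φ.mem_get_index x⟩

lemma index_surjective (Φ : OSP n) : Function.Surjective Φ.index := fun l => by
  obtain ⟨x, hx⟩ := Φ.nonempty _ (List.get_mem _ l)
  exact ⟨x, mem_get_iff.mp hx⟩

lemma index_injective_of_card_eq_one {Φ : OSP n} (h : ∀ B ∈ Φ.blocks, B.card = 1) :
    Function.Injective Φ.index := fun x y hxy => by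
  have hx := Φ.mem_get_index x
  rw [hxy] at hx
  exact Finset.card_le_one.mp (h _ (List.get_mem _ _)).le _ hx _ (Φ.mem_get_index y)

lemma delta_iff {Φ : OSP n} {a : Fin n → ℕ} :
    Φ.delta a ↔ ∀ i j, a i ≤ a j ↔ Φ.index i ≤ Φ.index j := by
  constructor
  · rintro ⟨idx, hidx, hle⟩
    obtain rfl : idx = Φ.index := funext fun i => (mem_get_iff.mp (hidx i)).symm
    simpa only [Fin.le_def] using hle
  · exact fun h => ⟨Φ.index, Φ.mem_get_index, by simpa only [Fin.le_def] using h⟩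

lemma index_le_index_of_refines {Ψ Φ : OSP n} (h : Ψ.refines Φ) {x y : Fin n}
    (hxy : Ψ.index x ≤ Ψ.index y) : Φ.index x ≤ Φ.index y := by
  obtain ⟨g, hg, hblocks⟩ := h
  have hindex : ∀ x, Φ.index x = g (Ψ.index x) := fun x => by
    refine mem_get_iff.mp ?_
    rw [hblocks, Finset.mem_biUnion]
    exact ⟨Ψ.index x, Finset.mem_filter.mpr ⟨Finset.mem_univ _, rfl⟩, Ψ.mem_get_index x⟩
  rw [hindex, hindex]
  exact hg hxy

lemma refines_of_index_le_index {Ψ Φ : OSP n}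
    (h : ∀ x y, Ψ.index x ≤ Ψ.index y → Φ.index x ≤ Φ.index y) : Ψ.refines Φ := by
  choose w hw using Ψ.index_surjective
  have hindex : ∀ x, Φ.index (w (Ψ.index x)) = Φ.index x := fun x =>
    le_antisymm (h _ _ (hw _).le) (h _ _ (hw _).ge)
  refine ⟨fun m => Φ.index (w m), fun m m' hm => h _ _ (by rwa [hw, hw]), fun l => ?_⟩
  ext x
  simp only [mem_get_iff, Finset.mem_biUnion, Finset.mem_filter, Finset.mem_univ, true_and]
  constructor
  · rintro rfl
    exact ⟨Ψ.index x, hindex x, rfl⟩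
  · rintro ⟨m, rfl, rfl⟩
    exact (hindex x).symm

lemma refines_iff {Ψ Φ : OSP n} :
    Ψ.refines Φ ↔ ∀ x y, Ψ.index x ≤ Ψ.index y → Φ.index x ≤ Φ.index y :=
  ⟨fun h _ _ => index_le_index_of_refines h, refines_of_index_le_index⟩

lemma exists_delta (a : Fin n → ℕ) : ∃ Φ : OSP n, Φ.delta a := by
  classical
  set V : List ℕ := (Finset.univ.image a).sort with hV
  have hmemV : ∀ i, a i ∈ V := fun i => by simp [hV]
  have hidx : ∀ i, V.idxOf (a i) < V.length := fun i => List.idxOf_lt_length_iff.mpr (hmemV i)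
  refine ⟨⟨V.map fun v => ({i | a i = v} : Finset (Fin n)), ?_, ?_, ?_⟩,
    fun i => ⟨V.idxOf (a i), by simpa using hidx i⟩, fun i => ?_, fun i j => ?_⟩
  · simp only [List.mem_map, hV, Finset.mem_sort, Finset.mem_image]
    rintro _ ⟨_, ⟨i, -, rfl⟩, rfl⟩
    exact ⟨i, by simp⟩
  · refine List.Pairwise.map _ (fun v w hvw => ?_) (Finset.sort_nodup _ _)
    exact Finset.disjoint_filter.mpr fun i _ hv hw => hvw (hv.symm.trans hw)
  · exact fun i => ⟨_, List.mem_map_of_mem (hmemV i), by simp⟩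
  · simp
  · have hsorted : V.SortedLT := Finset.sortedLT_sort _
    have hsort := hsorted.strictMono_get.le_iff_le
      (a := ⟨_, hidx i⟩) (b := ⟨_, hidx j⟩)
    simpa only [List.get_eq_getElem, List.getElem_idxOf, Fin.le_def] using hsort

lemma exists_delta_refines_iff {Φc Φf : OSP n} {a : Fin n → ℕ} :
    (∃ Φ : OSP n, Φ.delta a ∧ Φ.refines Φc ∧ Φf.refines Φ) ↔
      (∀ x y, Φf.index x ≤ Φf.index y → a x ≤ a y) ∧
        ∀ x y, a x ≤ a y → Φc.index x ≤ Φc.index y := by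
  simp only [delta_iff, refines_iff]
  constructor
  · rintro ⟨Φ, hΦ, hc, hf⟩
    exact ⟨fun x y h => (hΦ x y).mpr (hf x y h), fun x y h => hc x y ((hΦ x y).mp h)⟩
  · rintro ⟨hf, hc⟩
    obtain ⟨Φ, hΦ⟩ := exists_delta a
    rw [delta_iff] at hΦ
    exact ⟨Φ, hΦ, fun x y h => hc x y ((hΦ x y).mpr h), fun x y h => (hΦ x y).mp (hf x y h)⟩

noncomputable def indexEquivOfCardEqOne {Φ : OSP n} (h : ∀ B ∈ Φ.blocks, B.card = 1) :
    Fin n ≃ Fin Φ.blocks.length :=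
  Equiv.ofBijective Φ.index ⟨index_injective_of_card_eq_one h, Φ.index_surjective⟩

@[simp]
lemma indexEquivOfCardEqOne_apply {Φ : OSP n} (h : ∀ B ∈ Φ.blocks, B.card = 1) (x : Fin n) :
    indexEquivOfCardEqOne h x = Φ.index x :=
  rfl

@[simp]
lemma index_indexEquivOfCardEqOne_symm {Φ : OSP n} (h : ∀ B ∈ Φ.blocks, B.card = 1)
    (p : Fin Φ.blocks.length) : Φ.index ((indexEquivOfCardEqOne h).symm p) = p :=
  (indexEquivOfCardEqOne h).apply_symm_apply p

@[simp]
lemma indexEquivOfCardEqOne_symm_index {Φ : OSP n} (h : ∀ B ∈ Φ.blocks, B.card = 1)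
    (x : Fin n) : (indexEquivOfCardEqOne h).symm (Φ.index x) = x :=
  (indexEquivOfCardEqOne h).symm_apply_apply x

lemma monotone_index_comp_indexEquivOfCardEqOne_symm {Φc Φf : OSP n}
    (hsing : ∀ B ∈ Φf.blocks, B.card = 1) (href : Φf.refines Φc) :
    Monotone (Φc.index ∘ (indexEquivOfCardEqOne hsing).symm) := fun p q hpq =>
  index_le_index_of_refines href (by simpa using hpq)

lemma setOf_delta_between_eq_image {Φc Φf : OSP n} (hsing : ∀ B ∈ Φf.blocks, B.card = 1)
    (href : Φf.refines Φc) (k : ℕ) :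
    {a : Fin n → ℕ | (∀ i, a i ∈ Finset.Icc 1 k) ∧
        ∃ Φ : OSP n, Φ.delta a ∧ Φ.refines Φc ∧ Φf.refines Φ} =
      (· ∘ indexEquivOfCardEqOne hsing) ''
        intervalPoints (Φc.index ∘ (indexEquivOfCardEqOne hsing).symm) k := by
  set σ := indexEquivOfCardEqOne hsing
  have hg := monotone_index_comp_indexEquivOfCardEqOne_symm hsing href
  have hs := Φc.index_surjective.comp σ.symm.surjective
  ext a
  simp only [exists_delta_refines_iff, intervalPoints, Set.mem_image]
  constructor
  · rintro ⟨hk, hf, hc⟩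
    refine ⟨a ∘ σ.symm, ⟨fun p => hk _, (hg.monotone_and_le_imp_le_iff hs).mp
      ⟨fun p q hpq => hf _ _ (by simpa [σ] using hpq), fun p q h => hc _ _ h⟩⟩, by ext; simp⟩
  · rintro ⟨b, ⟨hk, hmono⟩, rfl⟩
    obtain ⟨hb, hbg⟩ := (hg.monotone_and_le_imp_le_iff hs).mpr hmono
    exact ⟨fun x => hk _, fun x y h => hb (by simpa [σ] using h),
      fun x y h => by simpa [σ] using hbg _ _ h⟩

end OSP

/-- the number of `a ∈ [k]^n` whose order class lies in the refinement interval
`[Φc, Φf]`, where `Φc` has `j` blocks and `Φf` is a length-`n` refinement of `Φc`,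
equals `C(k+n−j, n)`. -/
theorem card_orderClass_interval {n j : ℕ} (Φc Φf : OSP n)
    (hc : Φc.length = j) (hf : Φf.length = n)
    (hsing : ∀ B ∈ Φf.blocks, B.card = 1)
    (href : Φf.refines Φc) (k : ℕ) :
    {a : Fin n → ℕ | (∀ i, a i ∈ Finset.Icc 1 k) ∧
        ∃ Φ : OSP n, Φ.delta a ∧ Φ.refines Φc ∧ Φf.refines Φ}.ncard
      = (k + n - j).choose n := by
  set σ := OSP.indexEquivOfCardEqOne hsing
  have hg := OSP.monotone_index_comp_indexEquivOfCardEqOne_symm hsing href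
  have hs := Φc.index_surjective.comp σ.symm.surjective
  rw [OSP.setOf_delta_between_eq_image hsing href,
    Set.ncard_image_of_injective _ σ.surjective.injective_comp_right, ncard_intervalPoints hg hs]
  unfold OSP.length at hc hf
  rw [hf, hc]
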